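/- Fix a nonempty finite set S with p_k ∈ [0,1] and α_k > 0 for each k ∈ S, and assume p_k > 0 for at least one k ∈ S. For nonempty U ⊆ S define F_S(U) = (1 − ∏_{k∈U}(1−p_k)) / (Σ_{j∈U} α_j) · ∏_{k∈S∖U}(1−p_k). If S_max is a nonempty subset of S maximizing F_S over nonempty subsets of S, then for every nonempty U ⊆ S_max: (1 − ∏_{k∈U}(1−p_k)) / (1 − ∏_{k∈S_max}(1−p_k)) ≥ (Σ_{j∈U} α_j) / (Σ_{j∈S_max} α_j). Consequently S_max satisfies the subgroup stability criterion. -/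
import Mathlib


/-- The subgroup stability criterion for a finite set `S'` of agents with request
probabilities `p` and weights `α`. -/
def StabCrit {ι : Type*} (α p : ι → ℝ) (S' : Finset ι) : Prop :=
  ∀ R ⊆ S', R.Nonempty →
    (1 - ∏ k ∈ S', (1 - p k)) / (∑ k ∈ S', α k) ≤ (1 - ∏ k ∈ R, (1 - p k)) / (∑ k ∈ R, α k)

/-- `F_S(U) = (1 − ∏_{k∈U}(1−p_k))/Σ_{j∈U} α_j · ∏_{k∈S∖U}(1−p_k)`. -/
noncomputable def FS {ι : Type*} [DecidableEq ι] (α p : ι → ℝ) (S U : Finset ι) : ℝ :=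
  (1 - ∏ k ∈ U, (1 - p k)) / (∑ j ∈ U, α j) * ∏ k ∈ S \ U, (1 - p k)

/-- The maximizer of `F_S` is stable: if `S_max` maximizes `F_S` over
nonempty subsets of `S`, then for every nonempty `U ⊆ S_max`,
`(1 − ∏_{k∈U}(1−p_k))/(1 − ∏_{k∈S_max}(1−p_k)) ≥ Σ_{j∈U} α_j / Σ_{j∈S_max} α_j`;
consequently `S_max` satisfies the subgroup stability criterion. -/
theorem maximizer_of_FS_is_stable {ι : Type*} [DecidableEq ι]
    (S : Finset ι) (hS : S.Nonempty)
    (p α : ι → ℝ) (hp : ∀ k ∈ S, p k ∈ Set.Icc (0 : ℝ) 1) (hα : ∀ k ∈ S, 0 < α k)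
    (hpos : ∃ k ∈ S, 0 < p k)
    (Smax : Finset ι) (hsub : Smax ⊆ S) (hne : Smax.Nonempty)
    (hmax : ∀ U ⊆ S, U.Nonempty → FS α p S U ≤ FS α p S Smax) :
    (∀ U ⊆ Smax, U.Nonempty →
      (∑ j ∈ U, α j) / (∑ j ∈ Smax, α j)
        ≤ (1 - ∏ k ∈ U, (1 - p k)) / (1 - ∏ k ∈ Smax, (1 - p k))) ∧
    StabCrit α p Smax := by
  -- basic facts
  have hq0 : ∀ T ⊆ S, 0 ≤ ∏ k ∈ T, (1 - p k) := fun T hT =>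
    Finset.prod_nonneg fun k hk => by have := hp k (hT hk); linarith [this.2]
  have hq1 : ∀ T ⊆ S, ∏ k ∈ T, (1 - p k) ≤ 1 := fun T hT =>
    Finset.prod_le_one (fun k hk => by have := hp k (hT hk); linarith [this.2])
      (fun k hk => by have := hp k (hT hk); linarith [this.1])
  have hsum : ∀ T ⊆ S, T.Nonempty → 0 < ∑ j ∈ T, α j := fun T hT hTne =>
    Finset.sum_pos (fun j hj => hα j (hT hj)) hTne
  have hA : 0 < ∑ j ∈ Smax, α j := hsum Smax hsub hne
  set P : ℝ := ∏ k ∈ Smax, (1 - p k) with hPdef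
  set A : ℝ := ∑ j ∈ Smax, α j with hAdef
  set C : ℝ := ∏ k ∈ S \ Smax, (1 - p k) with hCdef
  -- ∏_S < 1
  obtain ⟨k0, hk0S, hk0⟩ := hpos
  have hprodS : ∏ k ∈ S, (1 - p k) < 1 := by
    have h1 : (1 - p k0) * ∏ x ∈ S.erase k0, (1 - p x) = ∏ x ∈ S, (1 - p x) :=
      Finset.mul_prod_erase S (fun k => (1 - p k)) hk0S
    have h2 : 0 ≤ ∏ k ∈ S.erase k0, (1 - p k) := hq0 _ (Finset.erase_subset _ _)
    have h3 : ∏ k ∈ S.erase k0, (1 - p k) ≤ 1 := hq1 _ (Finset.erase_subset _ _)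
    have h4 : 0 ≤ 1 - p k0 := by have := hp k0 hk0S; linarith [this.2]
    nlinarith
  have hFSS : 0 < FS α p S S := by
    unfold FS
    rw [Finset.sdiff_self, Finset.prod_empty, mul_one]
    exact div_pos (by linarith) (hsum S le_rfl hS)
  have hFSmax : 0 < FS α p S Smax := lt_of_lt_of_le hFSS (hmax S le_rfl hS)
  have hFSmax' : 0 < (1 - P) / A * C := hFSmax
  have hC0 : 0 ≤ C := hq0 _ Finset.sdiff_subset
  have hC : 0 < C := by
    rcases hC0.lt_or_eq with h | h
    · exact h
    · exfalso; rw [← h, mul_zero] at hFSmax'; exact lt_irrefl 0 hFSmax'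
  have hdiv : 0 < (1 - P) / A := by
    rcases mul_pos_iff.mp hFSmax' with ⟨h, _⟩ | ⟨_, h⟩
    · exact h
    · linarith
  have h1P : 0 < 1 - P := by
    rcases div_pos_iff.mp hdiv with ⟨h, _⟩ | ⟨_, h⟩
    · exact h
    · linarith
  -- key inequality
  have key : ∀ U ⊆ Smax, U.Nonempty →
      (∑ j ∈ U, α j) * (1 - P) ≤ A * (1 - ∏ k ∈ U, (1 - p k)) := by
    intro U hU hUne
    rcases eq_or_lt_of_le (Finset.le_iff_subset.mpr hU) with heq | hlt
    · rw [heq]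
    · set V : Finset ι := Smax \ U with hVdef
      have hVne : V.Nonempty := by
        rw [Finset.sdiff_nonempty]
        exact (Finset.ssubset_def.mp hlt).2
      have hVS : V ⊆ S := (Finset.sdiff_subset).trans hsub
      have hb : 0 < ∑ j ∈ V, α j := hsum V hVS hVne
      set Q : ℝ := ∏ k ∈ U, (1 - p k) with hQdef
      set R : ℝ := ∏ k ∈ V, (1 - p k) with hRdef
      set a : ℝ := ∑ j ∈ U, α j with hadef
      set b : ℝ := ∑ j ∈ V, α j with hbdef
      have hPQR : R * Q = P := Finset.prod_sdiff hU
      have hAab : b + a = A := Finset.sum_sdiff hU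
      have hset : S \ V = (S \ Smax) ∪ U := by
        ext x
        simp only [hVdef, Finset.mem_sdiff, Finset.mem_union]
        have h1 := @hU x
        have h2 := @hsub x
        tauto
      have hdisj : Disjoint (S \ Smax) U :=
        (Finset.sdiff_disjoint).mono_right hU
      have hineq := hmax V hVS hVne
      unfold FS at hineq
      rw [hset, Finset.prod_union hdisj] at hineq
      -- hineq : (1 - R)/b * (C * Q) ≤ (1 - P)/A * C
      rw [div_mul_eq_mul_div, div_mul_eq_mul_div, div_le_div_iff₀ hb hA] at hineq
      -- hineq : (1 - R) * (C * Q) * A ≤ (1 - P) * C * b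
      have h2 : (1 - R) * Q * A ≤ (1 - P) * b := by
        have h3 : (1 - R) * Q * A * C ≤ (1 - P) * b * C := by nlinarith [hineq]
        exact le_of_mul_le_mul_right h3 hC
      have hQ0 : 0 ≤ Q := hq0 _ (hU.trans hsub)
      nlinarith [h2, hPQR, hAab]
  have ha' : ∀ U ⊆ Smax, U.Nonempty → 0 < ∑ j ∈ U, α j :=
    fun U hU hUne => hsum U (hU.trans hsub) hUne
  constructor
  · intro U hU hUne
    rw [div_le_div_iff₀ hA h1P]
    nlinarith [key U hU hUne]
  · intro U hU hUne
    rw [div_le_div_iff₀ hA (ha' U hU hUne)]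
    nlinarith [key U hU hUne]
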